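/- For the complete bipartite graph K_{m,n} with m, n ≥ 1, the harmonic index of its total graph satisfies H(T(K_{m,n})) = mn/2 + 8mn(m + n)/((3m + n)(m + 3n)). -/

import Mathlib

open scoped Classical

/-- The total graph `T(G)` of a simple graph `G`: its vertex set is `V(G) ∪ E(G)`,
and two vertices of `T(G)` are adjacent iff the corresponding elements of `G`
are adjacent vertices, adjacent (distinct, sharing an endpoint) edges, or an
incident vertex–edge pair. -/
def SimpleGraph.totalGraph {V : Type*} (G : SimpleGraph V) :
    SimpleGraph (V ⊕ G.edgeSet) where
  Adj x y :=
    match x, y with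
    | Sum.inl u, Sum.inl v => G.Adj u v
    | Sum.inl u, Sum.inr e => u ∈ (e : Sym2 V)
    | Sum.inr e, Sum.inl u => u ∈ (e : Sym2 V)
    | Sum.inr e, Sum.inr f => e ≠ f ∧ ∃ v, v ∈ (e : Sym2 V) ∧ v ∈ (f : Sym2 V)
  symm := ⟨by
    rintro (u | e) (v | f) h
    · exact h.symm
    · exact h
    · exact h
    · exact ⟨h.1.symm, h.2.imp fun v hv => ⟨hv.2, hv.1⟩⟩⟩
  loopless := ⟨by
    rintro (u | e) h
    · exact G.irrefl h
    · exact h.1 rfl⟩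

/-- The harmonic index `H(G) = ∑_{uv ∈ E(G)} 2 / (deg u + deg v)`. -/
noncomputable def SimpleGraph.harmonicIndex {V : Type*} [Fintype V] (G : SimpleGraph V) : ℝ :=
  ∑ e ∈ G.edgeFinset,
    Sym2.lift ⟨fun u v => 2 / ((G.degree u : ℝ) + (G.degree v : ℝ)),
      fun u v => by simp [add_comm]⟩ e

/-! In `T(G)` a vertex `v` has degree `2 d(v)` and an edge `uw` has degree `d(u) + d(w)`, which is
its degree in the line graph plus `2`. Suppose `d(u) + d(w) = k` for every edge, as in `K_{m,n}`
with `k = m + n`. Writing `H = ∑_x ∑_{y ~ x} 1 / (d x + d y)`, the vertex–vertex and edge–edge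
adjacencies contribute `(∑_v d(v) + ∑_e (k - 2)) / (2k) = |E| / 2`, and the vertex–edge incidences,
counted once from each side, contribute `2 ∑_v d(v) / (2 d(v) + k)`. -/

namespace SimpleGraph

open Finset

variable {V : Type*} (G : SimpleGraph V)

@[simp] theorem totalGraph_adj_inl_inl {u v : V} :
    G.totalGraph.Adj (.inl u) (.inl v) ↔ G.Adj u v := .rfl

@[simp] theorem totalGraph_adj_inl_inr {v : V} {e : G.edgeSet} :
    G.totalGraph.Adj (.inl v) (.inr e) ↔ v ∈ (e : Sym2 V) := .rfl

@[simp] theorem totalGraph_adj_inr_inl {v : V} {e : G.edgeSet} :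
    G.totalGraph.Adj (.inr e) (.inl v) ↔ v ∈ (e : Sym2 V) := .rfl

@[simp] theorem totalGraph_adj_inr_inr {e f : G.edgeSet} :
    G.totalGraph.Adj (.inr e) (.inr f) ↔ G.lineGraph.Adj e f :=
  lineGraph_adj_iff_exists.symm

variable [Fintype V] {M : Type*} [AddCommMonoid M]

theorem sum_darts_eq_sum_sum_neighborFinset (f : V → V → M) :
    ∑ d : G.Dart, f d.fst d.snd = ∑ u, ∑ v ∈ G.neighborFinset u, f u v := by
  rw [sum_sigma']
  refine sum_bij' (fun d _ ↦ ⟨d.fst, d.snd⟩) (fun p hp ↦ ⟨(p.1, p.2), by simpa using hp⟩)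
    ?_ ?_ ?_ ?_ ?_ <;> simp

theorem sum_darts_eq_two_nsmul_sum_edgeFinset (f : V → V → M)
    (hf : ∀ u v, f u v = f v u) :
    ∑ d : G.Dart, f d.fst d.snd = 2 • ∑ e ∈ G.edgeFinset, Sym2.lift ⟨f, hf⟩ e := by
  rw [← sum_fiberwise_of_maps_to (g := Dart.edge) (t := G.edgeFinset) (by simp),
    smul_sum]
  refine sum_congr rfl fun e he ↦ ?_
  rw [sum_congr rfl fun d hd ↦ (by rw [← (mem_filter.1 hd).2]; rfl :
      f d.fst d.snd = Sym2.lift ⟨f, hf⟩ e), sum_const,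
    G.dart_edge_fiber_card e (mem_edgeFinset.1 he)]

theorem harmonicIndex_eq_sum_sum_neighborFinset :
    G.harmonicIndex = ∑ u, ∑ v ∈ G.neighborFinset u, 1 / ((G.degree u : ℝ) + G.degree v) := by
  let f (u v : V) : ℝ := 2 / ((G.degree u : ℝ) + G.degree v)
  have h := (G.sum_darts_eq_two_nsmul_sum_edgeFinset f fun u v ↦ by simp [f, add_comm]).symm.trans
    (G.sum_darts_eq_sum_sum_neighborFinset f)
  rw [two_nsmul, ← two_mul] at h
  refine mul_left_cancel₀ two_ne_zero (h.trans ?_)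
  simp only [f, mul_sum, mul_one_div]

theorem sum_neighborFinset_sum_type {α β : Type*} [Fintype α] [Fintype β]
    (H : SimpleGraph (α ⊕ β)) (x : α ⊕ β) (g : α ⊕ β → M) :
    ∑ y ∈ H.neighborFinset x, g y =
      ∑ a with H.Adj x (.inl a), g (.inl a) + ∑ b with H.Adj x (.inr b), g (.inr b) := by
  rw [neighborFinset_eq_filter, sum_filter, Fintype.sum_sum_type, sum_filter, sum_filter]

/-- `G.incidenceFinset v` as a finset of `G.edgeSet`, the vertex type of the line graph. -/
noncomputable def incidentEdges (v : V) : Finset G.edgeSet := {e | v ∈ (e : Sym2 V)}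

theorem card_incidentEdges (v : V) : #(G.incidentEdges v) = G.degree v := by
  rw [← card_incidenceFinset_eq_degree, ← card_map (Function.Embedding.subtype _)]
  congr 1
  ext e
  simp [incidentEdges, incidenceSet, and_comm]

theorem incidentEdges_inter_incidentEdges {e : G.edgeSet} {u w : V}
    (he : (e : Sym2 V) = s(u, w)) : G.incidentEdges u ∩ G.incidentEdges w = {e} := by
  ext f
  simp only [incidentEdges, mem_inter, mem_filter, mem_univ, true_and, mem_singleton]
  constructor
  · rintro ⟨hu, hw⟩
    have huw : u ≠ w := G.ne_of_adj (by rw [← mem_edgeSet, ← he]; exact e.2)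
    exact Subtype.ext ((Sym2.mem_and_mem_iff huw).1 ⟨hu, hw⟩ |>.trans he.symm)
  · rintro rfl
    simp [he]

theorem lineGraph_neighborFinset {e : G.edgeSet} {u w : V} (he : (e : Sym2 V) = s(u, w)) :
    G.lineGraph.neighborFinset e = (G.incidentEdges u ∪ G.incidentEdges w).erase e := by
  ext f
  simp [lineGraph_adj_iff_exists, incidentEdges, he, ne_comm]

theorem lineGraph_degree_add_two {e : G.edgeSet} {u w : V} (he : (e : Sym2 V) = s(u, w)) :
    G.lineGraph.degree e + 2 = G.degree u + G.degree w := by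
  have hmem : e ∈ G.incidentEdges u ∪ G.incidentEdges w := by simp [incidentEdges, he]
  have hcard := card_union_add_card_inter (G.incidentEdges u) (G.incidentEdges w)
  rw [G.incidentEdges_inter_incidentEdges he, card_singleton, card_incidentEdges,
    card_incidentEdges] at hcard
  rw [← card_neighborFinset_eq_degree, G.lineGraph_neighborFinset he, card_erase_of_mem hmem]
  have := card_pos.2 ⟨e, hmem⟩
  omega

theorem totalGraph_sum_neighborFinset_inl (v : V) (g : V ⊕ G.edgeSet → M) :
    ∑ y ∈ G.totalGraph.neighborFinset (.inl v), g y =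
      ∑ u ∈ G.neighborFinset v, g (.inl u) + ∑ e ∈ G.incidentEdges v, g (.inr e) := by
  rw [sum_neighborFinset_sum_type]
  simp [neighborFinset_eq_filter, incidentEdges]

theorem totalGraph_sum_neighborFinset_inr (e : G.edgeSet) (g : V ⊕ G.edgeSet → M) :
    ∑ y ∈ G.totalGraph.neighborFinset (.inr e), g y =
      ∑ v with v ∈ (e : Sym2 V), g (.inl v) + ∑ f ∈ G.lineGraph.neighborFinset e, g (.inr f) := by
  rw [sum_neighborFinset_sum_type]
  simp [neighborFinset_eq_filter]

theorem sum_sum_incidentEdges_comm (f : V → G.edgeSet → M) :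
    ∑ v, ∑ e ∈ G.incidentEdges v, f v e = ∑ e : G.edgeSet, ∑ v with v ∈ (e : Sym2 V), f v e :=
  sum_comm' (by simp [incidentEdges])

theorem totalGraph_degree_inl (v : V) : G.totalGraph.degree (.inl v) = 2 * G.degree v := by
  rw [← card_neighborFinset_eq_degree, card_eq_sum_ones, totalGraph_sum_neighborFinset_inl,
    ← card_eq_sum_ones, ← card_eq_sum_ones, card_neighborFinset_eq_degree, card_incidentEdges,
    two_mul]

theorem totalGraph_degree_inr (e : G.edgeSet) :
    G.totalGraph.degree (.inr e) = G.lineGraph.degree e + 2 := by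
  rcases e with ⟨⟨u, w⟩, huw⟩
  have hends : ({v | v ∈ s(u, w)} : Finset V) = {u, w} := by ext; simp
  rw [← card_neighborFinset_eq_degree, card_eq_sum_ones, totalGraph_sum_neighborFinset_inr,
    ← card_eq_sum_ones, ← card_eq_sum_ones, hends, card_pair (G.ne_of_adj huw),
    card_neighborFinset_eq_degree, add_comm]

theorem lineGraph_degree_add_two_of_degree_add_degree_eq {k : ℕ}
    (hk : ∀ u w, G.Adj u w → G.degree u + G.degree w = k) (e : G.edgeSet) :
    G.lineGraph.degree e + 2 = k := by
  rcases e with ⟨⟨u, w⟩, huw⟩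
  exact (G.lineGraph_degree_add_two rfl).trans (hk u w huw)

theorem totalGraph_degree_inr_of_degree_add_degree_eq {k : ℕ}
    (hk : ∀ u w, G.Adj u w → G.degree u + G.degree w = k) (e : G.edgeSet) :
    G.totalGraph.degree (.inr e) = k := by
  rw [totalGraph_degree_inr, G.lineGraph_degree_add_two_of_degree_add_degree_eq hk]

theorem totalGraph_sum_neighborFinset_inl_of_degree_add_degree_eq {k : ℕ}
    (hk : ∀ u w, G.Adj u w → G.degree u + G.degree w = k) (v : V) :
    ∑ y ∈ G.totalGraph.neighborFinset (.inl v),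
        1 / ((G.totalGraph.degree (.inl v) : ℝ) + G.totalGraph.degree y) =
      G.degree v / (2 * k) + G.degree v / (2 * G.degree v + k) := by
  have hadj (u : V) (hu : u ∈ G.neighborFinset v) :
      (G.totalGraph.degree (.inl v) : ℝ) + G.totalGraph.degree (.inl u) = 2 * k := by
    simp only [totalGraph_degree_inl, ← hk v u ((mem_neighborFinset ..).1 hu)]
    push_cast
    ring
  rw [totalGraph_sum_neighborFinset_inl, sum_congr rfl fun u hu ↦ by rw [hadj u hu]]
  simp only [G.totalGraph_degree_inr_of_degree_add_degree_eq hk, totalGraph_degree_inl, sum_const,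
    card_neighborFinset_eq_degree, card_incidentEdges, nsmul_eq_mul]
  push_cast
  ring

theorem totalGraph_sum_neighborFinset_inr_of_degree_add_degree_eq {k : ℕ}
    (hk : ∀ u w, G.Adj u w → G.degree u + G.degree w = k) (e : G.edgeSet) :
    ∑ y ∈ G.totalGraph.neighborFinset (.inr e),
        1 / ((G.totalGraph.degree (.inr e) : ℝ) + G.totalGraph.degree y) =
      ∑ v with v ∈ (e : Sym2 V), 1 / (2 * (G.degree v : ℝ) + k) +
        G.lineGraph.degree e / (2 * k) := by
  simp only [totalGraph_sum_neighborFinset_inr, totalGraph_degree_inl,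
    G.totalGraph_degree_inr_of_degree_add_degree_eq hk, sum_const,
    card_neighborFinset_eq_degree, nsmul_eq_mul]
  push_cast
  simp only [add_comm (k : ℝ)]
  ring

theorem harmonicIndex_totalGraph_of_degree_add_degree_eq (k : ℕ)
    (hk : ∀ u w, G.Adj u w → G.degree u + G.degree w = k) :
    G.totalGraph.harmonicIndex =
      #G.edgeFinset / 2 + 2 * ∑ v, (G.degree v : ℝ) / (2 * G.degree v + k) := by
  have hcount : ∑ v, (G.degree v : ℝ) / (2 * k) +
      ∑ e : G.edgeSet, (G.lineGraph.degree e : ℝ) / (2 * k) = #G.edgeFinset / 2 := by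
    have hdeg_sum : ∑ v, (G.degree v : ℝ) / (2 * k) = ∑ _e : G.edgeSet, (2 : ℝ) / (2 * k) := by
      rw [← sum_div, ← Nat.cast_sum, sum_degrees_eq_twice_card_edges, sum_const, card_univ,
        edgeFinset_card, nsmul_eq_mul]
      push_cast
      ring
    -- `k = (degree in the line graph) + 2` is positive as soon as there is an edge
    have hedge (e : G.edgeSet) : 2 / (2 * k) + (G.lineGraph.degree e : ℝ) / (2 * k) = 1 / 2 := by
      rw [← G.lineGraph_degree_add_two_of_degree_add_degree_eq hk e]
      push_cast
      field_simp
      ring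
    rw [hdeg_sum, ← sum_add_distrib, sum_congr rfl fun e _ ↦ hedge e, sum_const, card_univ,
      edgeFinset_card, nsmul_eq_mul]
    ring
  rw [harmonicIndex_eq_sum_sum_neighborFinset, Fintype.sum_sum_type]
  simp only [G.totalGraph_sum_neighborFinset_inl_of_degree_add_degree_eq hk,
    G.totalGraph_sum_neighborFinset_inr_of_degree_add_degree_eq hk, sum_add_distrib]
  rw [← sum_sum_incidentEdges_comm, ← hcount]
  simp only [sum_const, card_incidentEdges, nsmul_eq_mul, mul_one_div]
  ring

section completeBipartiteGraph

variable {α β : Type*} [Fintype α] [Fintype β]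

theorem completeBipartiteGraph_degree_inl (a : α) :
    (completeBipartiteGraph α β).degree (.inl a) = Fintype.card β := by
  rw [← card_neighborFinset_eq_degree, card_eq_sum_ones, sum_neighborFinset_sum_type]
  simp

theorem completeBipartiteGraph_degree_inr (b : β) :
    (completeBipartiteGraph α β).degree (.inr b) = Fintype.card α := by
  rw [← card_neighborFinset_eq_degree, card_eq_sum_ones, sum_neighborFinset_sum_type]
  simp

theorem completeBipartiteGraph_degree_add_degree_of_adj {u w : α ⊕ β}
    (h : (completeBipartiteGraph α β).Adj u w) :
    (completeBipartiteGraph α β).degree u + (completeBipartiteGraph α β).degree w =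
      Fintype.card α + Fintype.card β := by
  rcases u with a | b <;> rcases w with a' | b' <;>
    simp_all [completeBipartiteGraph_degree_inl, completeBipartiteGraph_degree_inr, add_comm]

theorem card_edgeFinset_completeBipartiteGraph :
    #(completeBipartiteGraph α β).edgeFinset = Fintype.card α * Fintype.card β := by
  have := encard_edgeSet_completeBipartiteGraph (W₁ := α) (W₂ := β)
  rw [← coe_edgeFinset, Set.encard_coe_eq_coe_finsetCard] at this
  simp only [ENat.card_eq_coe_fintype_card] at this
  exact_mod_cast this

end completeBipartiteGraph

end SimpleGraph

open SimpleGraph Finset in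
/-- For the complete bipartite graph `K_{m,n}` with `m, n ≥ 1`,
`H(T(K_{m,n})) = mn/2 + 8mn(m + n)/((3m + n)(m + 3n))`. -/
theorem harmonicIndex_totalGraph_completeBipartite (m n : ℕ) (hm : 1 ≤ m) (hn : 1 ≤ n) :
    (completeBipartiteGraph (Fin m) (Fin n)).totalGraph.harmonicIndex
      = (m : ℝ) * (n : ℝ) / 2
        + 8 * (m : ℝ) * (n : ℝ) * ((m : ℝ) + (n : ℝ))
            / ((3 * (m : ℝ) + (n : ℝ)) * ((m : ℝ) + 3 * (n : ℝ))) := by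
  rw [harmonicIndex_totalGraph_of_degree_add_degree_eq _ (m + n) fun u w h ↦ by
      simpa using completeBipartiteGraph_degree_add_degree_of_adj h,
    card_edgeFinset_completeBipartiteGraph, Fintype.sum_sum_type]
  simp only [completeBipartiteGraph_degree_inl, completeBipartiteGraph_degree_inr, sum_const,
    card_univ, Fintype.card_fin, nsmul_eq_mul]
  push_cast
  have hm' : (0 : ℝ) < m := by exact_mod_cast hm
  have hn' : (0 : ℝ) < n := by exact_mod_cast hn
  field_simp
  ring
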